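/- Let T_b be the tree defined by: T_0 is a single leaf; T_1 is a root with two leaf children; for b ≥ 2, T_b consists of a root whose right child is the root of a copy of T_{b-1} and whose left child is a node with single child the root of a copy of T_{b-2}. Then the number of leaves of T_b is F_{b+2} (the (b+2)-nd Fibonacci number), and the sum over all leaves v of 2^{α_v} equals 2^b, where α_v counts the number of left-child edges followed by single-child edges ('left steps') on the path from the root to v. -/
import Mathlib

/-- Trees with leaves, single-child ("left") nodes, and two-child ("right") nodes. -/
inductive PPCTree where
  | leaf : PPCTree
  | leftNode : PPCTree → PPCTree
  | rightNode : PPCTree → PPCTree → PPCTree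

/-- The recursion tree `T_b`: `T_0` is a single leaf; `T_1` is a root with two leaf
children; for `b ≥ 2`, the root of `T_b` has the root of `T_{b-1}` as right child, and
its left child is a single-child node whose child is the root of `T_{b-2}`. -/
def T : ℕ → PPCTree
  | 0 => .leaf
  | 1 => .rightNode .leaf .leaf
  | (b + 2) => .rightNode (.leftNode (T b)) (T (b + 1))

/-- The multiset of left-counts `α_v` of the leaves of a tree, given the left-count
`a` accumulated at its root: `α` stays the same passing to either child of a two-child
node, and increases by `1` passing from a single-child (left) node to its child. -/
def leafAlphas : PPCTree → ℕ → Multiset ℕ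
  | .leaf, a => {a}
  | .leftNode t, a => leafAlphas t (a + 1)
  | .rightNode l r, a => leafAlphas l a + leafAlphas r a

lemma aux (b : ℕ) : ∀ a, Multiset.card (leafAlphas (T b) a) = Nat.fib (b + 2) ∧
    ((leafAlphas (T b) a).map fun x => 2 ^ x).sum = 2 ^ (a + b) := by
  induction b using Nat.twoStepInduction with
  | zero => intro a; simp [T, leafAlphas]
  | one => intro a; refine ⟨by simp [T, leafAlphas]; decide, by simp [T, leafAlphas]; ring⟩
  | more b ih1 ih2 =>
    intro a
    simp only [T, leafAlphas]
    obtain ⟨h1, h2⟩ := ih1 (a + 1)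
    obtain ⟨h3, h4⟩ := ih2 a
    constructor
    · rw [Multiset.card_add, h1, h3, Nat.fib_add_two (n := b + 2)]
    · rw [Multiset.map_add, Multiset.sum_add, h2, h4]; ring

/-- The tree `T_b` has `F_{b+2}` leaves (where `F` is the Fibonacci sequence with
`F_1 = F_2 = 1`), and the sum over all leaves `v` of `2^{α_v}` equals `2^b`. -/
theorem leaves_T (b : ℕ) :
    Multiset.card (leafAlphas (T b) 0) = Nat.fib (b + 2) ∧
    ((leafAlphas (T b) 0).map fun a => 2 ^ a).sum = 2 ^ b := by
  simpa using aux b 0
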